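/- In the by-player-anywhere-same game, if the formula is blatantly true under the current partial assignment and there are m unassigned variables remaining, then the player to move wins if and only if m is odd (equivalently, the player who makes the final move wins, and no further move can be illegal). -/

import Mathlib

/-!
Assigning a variable only extends the partial assignment, and blatant truth is monotone under
extension, so once `f` is blatantly true it stays so for the rest of the game. Since a formula is
never blatantly true and blatantly false at once, no move can then be illegal: the game lasts
exactly as many moves as there are unassigned variables, and the player to move makes the last
move iff that number is odd.
-/

/-- Boolean formulas: variables, negation, conjunction of a list, disjunction of a list. -/
inductive Fm : Type where
  | var  : ℕ → Fm
  | neg  : Fm → Fm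
  | conj : List Fm → Fm
  | disj : List Fm → Fm

mutual
/-- `f` is blatantly false under the partial assignment `ρ`. -/
inductive BFalse (ρ : ℕ → Option Bool) : Fm → Prop where
  | var  {i} : ρ i = some false → BFalse ρ (.var i)
  | neg  {φ} : BTrue ρ φ → BFalse ρ (.neg φ)
  | disj {l} : (∀ φ ∈ l, BFalse ρ φ) → BFalse ρ (.disj l)
  | conj {l φ} : φ ∈ l → BFalse ρ φ → BFalse ρ (.conj l)

/-- `f` is blatantly true under the partial assignment `ρ`. -/
inductive BTrue (ρ : ℕ → Option Bool) : Fm → Prop where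
  | var  {i} : ρ i = some true → BTrue ρ (.var i)
  | neg  {φ} : BFalse ρ φ → BTrue ρ (.neg φ)
  | disj {l φ} : φ ∈ l → BTrue ρ φ → BTrue ρ (.disj l)
  | conj {l} : (∀ φ ∈ l, BTrue ρ φ) → BTrue ρ (.conj l)
end

/-- Standard Boolean evaluation under a total assignment. -/
def Fm.eval (σ : ℕ → Bool) : Fm → Bool
  | .var i  => σ i
  | .neg φ  => !(φ.eval σ)
  | .conj l => l.attach.all fun ⟨φ, _⟩ => φ.eval σ
  | .disj l => l.attach.any fun ⟨φ, _⟩ => φ.eval σ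

/-- The total assignment `σ` extends the partial assignment `ρ`. -/
def ExtendsPA (ρ : ℕ → Option Bool) (σ : ℕ → Bool) : Prop :=
  ∀ i b, ρ i = some b → σ i = b

/-- Update a partial assignment at one variable. -/
def updPA (ρ : ℕ → Option Bool) (x : ℕ) (b : Bool) : ℕ → Option Bool :=
  fun y => if y = x then some b else ρ y

/-- By-player-anywhere-same: the player `t` to move (who must assign the value `t`
to some unassigned variable `x < N` without making `f` blatantly false) wins,
where the fuel counts the remaining unassigned variables.  A player with no
legal move loses; the maker of the last move wins. -/
def BPASWin (f : Fm) (N : ℕ) : ℕ → Bool → (ℕ → Option Bool) → Prop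
  | 0, _, _ => False
  | m + 1, t, ρ => ∃ x < N, ρ x = none ∧ ¬ BFalse (updPA ρ x t) f ∧
      ¬ BPASWin f N m (!t) (updPA ρ x t)

section Monotonicity

variable {ρ ρ' : ℕ → Option Bool}

mutual
theorem BFalse.mono (hext : ∀ i b, ρ i = some b → ρ' i = some b) {f : Fm} :
    BFalse ρ f → BFalse ρ' f
  | .var h => .var (hext _ _ h)
  | .neg h => .neg (BTrue.mono hext h)
  | .disj h => .disj fun φ hφ => BFalse.mono hext (h φ hφ)
  | .conj hφ h => .conj hφ (BFalse.mono hext h)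

theorem BTrue.mono (hext : ∀ i b, ρ i = some b → ρ' i = some b) {f : Fm} :
    BTrue ρ f → BTrue ρ' f
  | .var h => .var (hext _ _ h)
  | .neg h => .neg (BFalse.mono hext h)
  | .disj hφ h => .disj hφ (BTrue.mono hext h)
  | .conj h => .conj fun φ hφ => BTrue.mono hext (h φ hφ)
end

end Monotonicity

mutual
theorem BFalse.not_bTrue {ρ : ℕ → Option Bool} {f : Fm} : BFalse ρ f → ¬ BTrue ρ f
  | .var h, .var h' => by simp_all
  | .neg h, .neg h' => BTrue.not_bFalse h h'
  | .disj h, .disj hφ h' => BTrue.not_bFalse h' (h _ hφ)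
  | .conj hφ h, .conj h' => BFalse.not_bTrue h (h' _ hφ)

theorem BTrue.not_bFalse {ρ : ℕ → Option Bool} {f : Fm} : BTrue ρ f → ¬ BFalse ρ f
  | .var h, .var h' => by simp_all
  | .neg h, .neg h' => BFalse.not_bTrue h h'
  | .disj hφ h, .disj h' => BTrue.not_bFalse h (h' _ hφ)
  | .conj h, .conj hφ h' => BFalse.not_bTrue h' (h _ hφ)
end

theorem BTrue.updPA {ρ : ℕ → Option Bool} {f : Fm} {x : ℕ} (hx : ρ x = none) (b : Bool)
    (h : BTrue ρ f) : BTrue (updPA ρ x b) f :=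
  h.mono fun i c hi => by
    have : i ≠ x := by rintro rfl; simp [hx] at hi
    simp only [_root_.updPA, if_neg this, hi]

def unassigned (N : ℕ) (ρ : ℕ → Option Bool) : Finset ℕ :=
  (Finset.range N).filter fun x => ρ x = none

theorem unassigned_updPA (N : ℕ) (ρ : ℕ → Option Bool) (x : ℕ) (b : Bool) :
    unassigned N (updPA ρ x b) = (unassigned N ρ).erase x := by
  ext y
  simp only [unassigned, Finset.mem_filter, Finset.mem_erase]
  by_cases hy : y = x <;> simp [updPA, hy]

theorem card_unassigned_updPA {N x : ℕ} {ρ : ℕ → Option Bool} (hxN : x < N) (hx : ρ x = none)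
    (b : Bool) : (unassigned N (updPA ρ x b)).card + 1 = (unassigned N ρ).card := by
  rw [unassigned_updPA]
  exact Finset.card_erase_add_one (by simp [unassigned, hxN, hx])

theorem bpasWin_iff_odd_of_bTrue (f : Fm) (N m : ℕ) :
    ∀ (ρ : ℕ → Option Bool) (t : Bool), BTrue ρ f → (unassigned N ρ).card = m →
      (BPASWin f N m t ρ ↔ Odd m) := by
  induction m with
  | zero => intro ρ t _ _; simp [BPASWin]
  | succ m ih =>
    intro ρ t hbt hm
    have after_move : ∀ x < N, ρ x = none → (BPASWin f N m (!t) (updPA ρ x t) ↔ Odd m) :=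
      fun x hxN hx => ih _ _ (hbt.updPA hx t) (by have := card_unassigned_updPA hxN hx t; omega)
    rw [Nat.odd_add_one]
    constructor
    · rintro ⟨x, hxN, hx, -, hlose⟩
      rwa [after_move x hxN hx] at hlose
    · intro heven
      obtain ⟨x, hx⟩ : (unassigned N ρ).Nonempty := by rw [← Finset.card_pos]; omega
      simp only [unassigned, Finset.mem_filter, Finset.mem_range] at hx
      exact ⟨x, hx.1, hx.2, (hbt.updPA hx.2 t).not_bFalse, by rwa [after_move x hx.1 hx.2]⟩

theorem bpas_blatantly_true_parity (f : Fm) (N m : ℕ) (ρ : ℕ → Option Bool) (t : Bool)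
    (hbt : BTrue ρ f)
    (hm : m = ((Finset.range N).filter fun x => ρ x = none).card) :
    (BPASWin f N m t ρ ↔ Odd m) :=
  bpasWin_iff_odd_of_bTrue f N m ρ t hbt hm.symm
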